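/- Let K = WithTop (ℕ ×ₗ ℕ) and L₂ = K × Bool with the componentwise lattice order, and let Γ be the set of non-generators of L₂. Then (⊤, false) is a relative generator of L₂ but (⊤, false) belongs to the complete sublattice generated by Γ (indeed (⊤, false) = ⨆_{n∈ℕ} ((n,0), false) with each ((n,0), false) ∈ Γ for n ≥ 1). In particular, Γ is not a complete sublattice of L₂. -/

import Mathlib

/-- A complete sublattice of a complete lattice: a subset closed under arbitrary
infima and suprema computed in `L` (including the empty ones, so it contains `⊤` and `⊥`). -/
def IsCompleteSublattice {L : Type*} [CompleteLattice L] (S : Set L) : Prop :=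
  (∀ Y : Set L, Y ⊆ S → sInf Y ∈ S) ∧ (∀ Y : Set L, Y ⊆ S → sSup Y ∈ S)

/-- The complete sublattice generated by `X`: the intersection of all complete
sublattices containing `X`. -/
def latGen {L : Type*} [CompleteLattice L] (X : Set L) : Set L :=
  ⋂₀ {S : Set L | IsCompleteSublattice S ∧ X ⊆ S}

/-- `a` is a non-generator (w.r.t. complete-sublattice generation). -/
def IsLatNonGenerator {L : Type*} [CompleteLattice L] (a : L) : Prop :=
  ∀ X : Set L, latGen (X ∪ {a}) = Set.univ → latGen X = Set.univ

/-- A maximal proper complete sublattice. -/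
def IsMaxProperSublattice {L : Type*} [CompleteLattice L] (P : Set L) : Prop :=
  IsCompleteSublattice P ∧ P ≠ Set.univ ∧
    ∀ Q : Set L, IsCompleteSublattice Q → Q ≠ Set.univ → P ⊆ Q → P = Q

/-- `ℕ ×ₗ ℕ` is a well-order, hence conditionally complete with bottom;
this makes `WithTop (ℕ ×ₗ ℕ)` a complete lattice of order type `ω² + 1`. -/
noncomputable instance : ConditionallyCompleteLinearOrderBot (ℕ ×ₗ ℕ) :=
  WellFoundedLT.conditionallyCompleteLinearOrderBot _

/- ------------------ auxiliary material ------------------ -/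

section GeneralHelpers

variable {L : Type*} [CompleteLattice L]

lemma isCS_latGen (X : Set L) : IsCompleteSublattice (latGen X) := by
  constructor
  · intro Y hY
    refine Set.mem_sInter.2 fun S hS => hS.1.1 Y fun y hy => Set.mem_sInter.1 (hY hy) S hS
  · intro Y hY
    refine Set.mem_sInter.2 fun S hS => hS.1.2 Y fun y hy => Set.mem_sInter.1 (hY hy) S hS

lemma subset_latGen (X : Set L) : X ⊆ latGen X :=
  fun _ hx => Set.mem_sInter.2 fun _ hS => hS.2 hx

lemma latGen_subset {X S : Set L} (h1 : IsCompleteSublattice S) (h2 : X ⊆ S) :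
    latGen X ⊆ S :=
  Set.sInter_subset_of_mem ⟨h1, h2⟩

end GeneralHelpers

abbrev Kt : Type := WithTop (ℕ ×ₗ ℕ)

lemma Kt.inf_mem_of_nonempty {A : Set Kt} (h : A.Nonempty) : sInf A ∈ A := by
  obtain ⟨m, hm, hmin⟩ := (IsWellFounded.wf (r := ((· < ·) : Kt → Kt → Prop))).has_min A h
  have : sInf A = m := le_antisymm (sInf_le hm) (le_sInf fun x hx => not_lt.1 (hmin x hx))
  rw [this]; exact hm

lemma Kt.sup_mem {Z : Set Kt} {x y : Kt} (hx : x ∈ Z) (hy : y ∈ Z) : x ⊔ y ∈ Z := by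
  rcases le_total x y with h | h
  · rwa [sup_eq_right.2 h]
  · rwa [sup_eq_left.2 h]

lemma Kt.coe_lex_le {a b : ℕ × ℕ} :
    ((toLex a : ℕ ×ₗ ℕ) : Kt) ≤ ((toLex b : ℕ ×ₗ ℕ) : Kt) ↔
      a.1 < b.1 ∨ (a.1 = b.1 ∧ a.2 ≤ b.2) := by
  rw [WithTop.coe_le_coe, Prod.Lex.le_iff]
  exact Iff.rfl

lemma Kt.coe_lex_lt {a b : ℕ × ℕ} :
    ((toLex a : ℕ ×ₗ ℕ) : Kt) < ((toLex b : ℕ ×ₗ ℕ) : Kt) ↔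
      a.1 < b.1 ∨ (a.1 = b.1 ∧ a.2 < b.2) := by
  rw [WithTop.coe_lt_coe, Prod.Lex.lt_iff]
  exact Iff.rfl

lemma Kt.sSup_top_of {A : Set Kt}
    (hA : ∀ p q : ℕ, ∃ x ∈ A, ((toLex (p, q) : ℕ ×ₗ ℕ) : Kt) < x) : sSup A = ⊤ := by
  rw [eq_top_iff, le_sSup_iff]
  intro b hb
  induction b using WithTop.recTopCoe with
  | top => exact le_refl _
  | coe p =>
    obtain ⟨x, hx, hlt⟩ := hA (ofLex p).1 (ofLex p).2
    have hxb : x ≤ (p : Kt) := hb hx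
    have : ((toLex ((ofLex p).1, (ofLex p).2) : ℕ ×ₗ ℕ) : Kt) = (p : Kt) := rfl
    rw [this] at hlt
    exact absurd (hlt.trans_le hxb) (lt_irrefl _)

lemma Kt.sSup_col (m : ℕ) :
    sSup (Set.range fun k : ℕ => ((toLex (m, k) : ℕ ×ₗ ℕ) : Kt)) =
      ((toLex (m + 1, 0) : ℕ ×ₗ ℕ) : Kt) := by
  apply le_antisymm
  · refine sSup_le ?_
    rintro x ⟨k, rfl⟩
    exact Kt.coe_lex_le.2 (Or.inl (Nat.lt_succ_self m))
  · rw [le_sSup_iff]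
    intro b hb
    induction b using WithTop.recTopCoe with
    | top => exact le_top
    | coe p =>
      have hp : ((toLex (m, (ofLex p).2 + 1) : ℕ ×ₗ ℕ) : Kt) ≤ (p : Kt) :=
        hb (Set.mem_range_self ((ofLex p).2 + 1))
      have hpe : ((toLex ((ofLex p).1, (ofLex p).2) : ℕ ×ₗ ℕ) : Kt) = (p : Kt) := rfl
      rw [← hpe] at hp ⊢
      rcases Kt.coe_lex_le.1 hp with h | h
      · exact Kt.coe_lex_le.2 (by omega)
      · omega

lemma fst_img_emb (b : Bool) (A : Set Kt) :
    Prod.fst '' ((fun k => ((k, b) : Kt × Bool)) '' A) = A := by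
  rw [Set.image_image]; simp

lemma snd_img_emb (b : Bool) (A : Set Kt) :
    Prod.snd '' ((fun k => ((k, b) : Kt × Bool)) '' A) = (fun _ : Kt => b) '' A := by
  rw [Set.image_image]

/-- sup of a set of `false`-elements in `Kt × Bool`. -/
lemma sSup_img_false (A : Set Kt) :
    sSup ((fun k => ((k, false) : Kt × Bool)) '' A) = (sSup A, false) := by
  apply Prod.ext
  · rw [Prod.fst_sSup, fst_img_emb]
  · rw [Prod.snd_sSup, snd_img_emb]
    apply le_antisymm
    · refine sSup_le ?_
      rintro b ⟨x, hx, rfl⟩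
      exact le_refl _
    · exact bot_le

lemma sSup_img_true (A : Set Kt) (hA : A.Nonempty) :
    sSup ((fun k => ((k, true) : Kt × Bool)) '' A) = (sSup A, true) := by
  apply Prod.ext
  · rw [Prod.fst_sSup, fst_img_emb]
  · rw [Prod.snd_sSup, snd_img_emb]
    apply le_antisymm le_top
    obtain ⟨k, hk⟩ := hA
    exact le_sSup ⟨k, hk, rfl⟩

lemma sInf_img_true (A : Set Kt) :
    sInf ((fun k => ((k, true) : Kt × Bool)) '' A) = (sInf A, true) := by
  apply Prod.ext
  · rw [Prod.fst_sInf, fst_img_emb]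
  · rw [Prod.snd_sInf, snd_img_emb]
    apply le_antisymm le_top
    refine le_sInf ?_
    rintro b ⟨x, hx, rfl⟩
    exact le_refl _

lemma sInf_img_false (A : Set Kt) (hA : A.Nonempty) :
    sInf ((fun k => ((k, false) : Kt × Bool)) '' A) = (sInf A, false) := by
  apply Prod.ext
  · rw [Prod.fst_sInf, fst_img_emb]
  · rw [Prod.snd_sInf, snd_img_emb]
    apply le_antisymm
    · obtain ⟨k, hk⟩ := hA
      exact sInf_le ⟨k, hk, rfl⟩
    · exact bot_le

lemma Y_decomp (Y : Set (Kt × Bool)) :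
    Y = ((fun k => ((k, false) : Kt × Bool)) '' {k | (k, false) ∈ Y}) ∪
        ((fun k => ((k, true) : Kt × Bool)) '' {k | (k, true) ∈ Y}) := by
  ext ⟨k, b⟩
  cases b <;> simp

section SubLat

variable {S : Set (Kt × Bool)}

lemma CSmem_bot (hS : IsCompleteSublattice S) : ((⊥ : Kt), false) ∈ S := by
  have h := hS.2 ∅ (Set.empty_subset S)
  rw [sSup_empty] at h
  exact h

lemma CSmem_top (hS : IsCompleteSublattice S) : ((⊤ : Kt), true) ∈ S := by
  have h := hS.1 ∅ (Set.empty_subset S)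
  rw [sInf_empty] at h
  exact h

lemma CSmem_supFT (hS : IsCompleteSublattice S) {f t : Kt}
    (hf : (f, false) ∈ S) (ht : (t, true) ∈ S) : (f ⊔ t, true) ∈ S := by
  have h := hS.2 {(f, false), (t, true)} (by
    rintro x hx
    rcases hx with rfl | hx
    · exact hf
    · rw [Set.mem_singleton_iff] at hx; subst hx; exact ht)
  rwa [sSup_pair, Prod.mk_sup_mk, (rfl : (false ⊔ true) = true)] at h

lemma CSmem_infFT (hS : IsCompleteSublattice S) {f t : Kt}
    (hf : (f, false) ∈ S) (ht : (t, true) ∈ S) : (f ⊓ t, false) ∈ S := by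
  have h := hS.1 {(f, false), (t, true)} (by
    rintro x hx
    rcases hx with rfl | hx
    · exact hf
    · rw [Set.mem_singleton_iff] at hx; subst hx; exact ht)
  rwa [sInf_pair, Prod.mk_inf_mk, (rfl : (false ⊓ true) = false)] at h

lemma CSmem_supF (hS : IsCompleteSublattice S) {A : Set Kt}
    (hA : ∀ k ∈ A, (k, false) ∈ S) : (sSup A, false) ∈ S := by
  have h := hS.2 ((fun k => ((k, false) : Kt × Bool)) '' A)
    (by rintro x ⟨k, hk, rfl⟩; exact hA k hk)
  rwa [sSup_img_false] at h

lemma CSmem_supT (hS : IsCompleteSublattice S) {A : Set Kt}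
    (hA : ∀ k ∈ A, (k, true) ∈ S) (hne : A.Nonempty) : (sSup A, true) ∈ S := by
  have h := hS.2 ((fun k => ((k, true) : Kt × Bool)) '' A)
    (by rintro x ⟨k, hk, rfl⟩; exact hA k hk)
  rwa [sSup_img_true A hne] at h

end SubLat

/-- Main lemma: for `n ≥ 1`, `((n,0), false)` is a non-generator of `Kt × Bool`. -/
lemma nongen_col (n : ℕ) (hn : 1 ≤ n) :
    IsLatNonGenerator (((toLex (n, 0) : ℕ ×ₗ ℕ) : Kt), false) := by
  intro X hX
  by_contra hS0
  set c : Kt := ((toLex (n, 0) : ℕ ×ₗ ℕ) : Kt) with hc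
  have hCS : IsCompleteSublattice (latGen X) := isCS_latGen X
  set S := latGen X with hSdef
  set F : Set Kt := {k | (k, false) ∈ S} with hF
  set T : Set Kt := {k | (k, true) ∈ S} with hT
  have botF : (⊥ : Kt) ∈ F := CSmem_bot hCS
  have topT : (⊤ : Kt) ∈ T := CSmem_top hCS
  have P1T : ∀ f ∈ F, ∀ t ∈ T, t < f → f ∈ T := by
    intro f hf t ht hlt
    have h := CSmem_supFT hCS hf ht
    rwa [sup_eq_left.2 hlt.le] at h
  have P1F : ∀ f ∈ F, ∀ t ∈ T, t < f → t ∈ F := by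
    intro f hf t ht hlt
    have h := CSmem_infFT hCS hf ht
    rwa [inf_eq_right.2 hlt.le] at h
  have Fsup : ∀ A : Set Kt, A ⊆ F → sSup A ∈ F := by
    rcases Set.eq_empty_or_nonempty (∅ : Set Kt) with _ | _
    all_goals exact fun A hA => CSmem_supF hCS fun k hk => hA hk
  have Tsup : ∀ A : Set Kt, A ⊆ T → A.Nonempty → sSup A ∈ T :=
    fun A hA hne => CSmem_supT hCS (fun k hk => hA hk) hne
  set FC : Set Kt := F ∪ ({c} ∪ {t | t ∈ T ∧ t ≤ c}) with hFCdef
  set TC : Set Kt := T ∪ {x | x ∈ FC ∧ ∃ t ∈ T, t < x} with hTCdef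
  have hFsubFC : F ⊆ FC := Set.subset_union_left
  have FCsup : ∀ A : Set Kt, A ⊆ FC → sSup A ∈ FC := by
    intro A hA
    have hdec : A = (A ∩ F) ∪ ((A ∩ {c}) ∪ (A ∩ {t | t ∈ T ∧ t ≤ c})) := by
      ext x
      constructor
      · intro hx
        rcases hA hx with h | h | h
        · exact Or.inl ⟨hx, h⟩
        · exact Or.inr (Or.inl ⟨hx, h⟩)
        · exact Or.inr (Or.inr ⟨hx, h⟩)
      · rintro (⟨hx, -⟩ | ⟨hx, -⟩ | ⟨hx, -⟩) <;> exact hx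
    rw [hdec, sSup_union, sSup_union]
    have h1 : sSup (A ∩ F) ∈ FC := hFsubFC (Fsup _ Set.inter_subset_right)
    have h2 : sSup (A ∩ {c}) ∈ FC := by
      rcases Set.eq_empty_or_nonempty (A ∩ {c}) with h | h
      · rw [h, sSup_empty]; exact hFsubFC botF
      · rw [(h.subset_singleton_iff).1 Set.inter_subset_right, sSup_singleton]
        exact Or.inr (Or.inl rfl)
    have h3 : sSup (A ∩ {t | t ∈ T ∧ t ≤ c}) ∈ FC := by
      rcases Set.eq_empty_or_nonempty (A ∩ {t | t ∈ T ∧ t ≤ c}) with h | h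
      · rw [h, sSup_empty]; exact hFsubFC botF
      · refine Or.inr (Or.inr ⟨Tsup _ (fun x hx => hx.2.1) h, ?_⟩)
        exact sSup_le fun x hx => hx.2.2
    exact Kt.sup_mem h1 (Kt.sup_mem h2 h3)
  have TCsup : ∀ A : Set Kt, A ⊆ TC → A.Nonempty → sSup A ∈ TC := by
    intro A hA hne
    have hdec : A = (A ∩ T) ∪ (A ∩ {x | x ∈ FC ∧ ∃ t ∈ T, t < x}) := by
      ext x
      constructor
      · intro hx
        rcases hA hx with h | h
        · exact Or.inl ⟨hx, h⟩
        · exact Or.inr ⟨hx, h⟩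
      · rintro (⟨hx, -⟩ | ⟨hx, -⟩) <;> exact hx
    rw [hdec, sSup_union]
    rcases Set.eq_empty_or_nonempty (A ∩ {x | x ∈ FC ∧ ∃ t ∈ T, t < x}) with h | h
    · rw [h, sSup_empty, sup_bot_eq]
      refine Or.inl (Tsup _ Set.inter_subset_right ?_)
      obtain ⟨x, hx⟩ := hne
      rcases hA hx with hxT | hxR
      · exact ⟨x, hx, hxT⟩
      · exact absurd (Set.mem_inter hx hxR) (by rw [h]; exact Set.notMem_empty x)
    · have h2 : sSup (A ∩ {x | x ∈ FC ∧ ∃ t ∈ T, t < x}) ∈ TC := by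
        refine Or.inr ⟨FCsup _ (fun x hx => hx.2.1), ?_⟩
        obtain ⟨x, hx⟩ := h
        obtain ⟨t, ht, hlt⟩ := hx.2.2
        exact ⟨t, ht, lt_of_lt_of_le hlt (le_sSup hx)⟩
      rcases Set.eq_empty_or_nonempty (A ∩ T) with h1 | h1
      · rw [h1, sSup_empty, bot_sup_eq]; exact h2
      · exact Kt.sup_mem (Or.inl (Tsup _ Set.inter_subset_right h1)) h2
  set C : Set (Kt × Bool) := {p | (p.2 = false ∧ p.1 ∈ FC) ∨ (p.2 = true ∧ p.1 ∈ TC)}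
    with hCdef
  have memCf : ∀ k : Kt, ((k, false) ∈ C ↔ k ∈ FC) := by
    intro k; simp [hCdef]
  have memCt : ∀ k : Kt, ((k, true) ∈ C ↔ k ∈ TC) := by
    intro k; simp [hCdef]
  have hCcs : IsCompleteSublattice C := by
    constructor
    · intro Y hY
      set A : Set Kt := {k | (k, false) ∈ Y} with hA
      set B : Set Kt := {k | (k, true) ∈ Y} with hB
      have hAF : A ⊆ FC := fun k hk => (memCf k).1 (hY hk)
      have hBT : B ⊆ TC := fun k hk => (memCt k).1 (hY hk)
      rw [Y_decomp Y, ← hA, ← hB, sInf_union, sInf_img_true]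
      rcases Set.eq_empty_or_nonempty A with hAe | hAne
      · rw [hAe, Set.image_empty, sInf_empty, top_inf_eq]
        refine (memCt _).2 ?_
        rcases Set.eq_empty_or_nonempty B with hBe | hBne
        · rw [hBe, sInf_empty]; exact Or.inl topT
        · exact hBT (Kt.inf_mem_of_nonempty hBne)
      · rw [sInf_img_false A hAne, Prod.mk_inf_mk, (rfl : (false ⊓ true) = false)]
        refine (memCf _).2 ?_
        rw [show sInf A ⊓ sInf B = sInf (A ∪ B) from (sInf_union).symm]
        have hne : (A ∪ B).Nonempty := hAne.inl
        rcases Kt.inf_mem_of_nonempty hne with hmA | hmB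
        · exact hAF hmA
        · rcases hBT hmB with ht | hrest
          · obtain ⟨a0, ha0⟩ := hAne
            have hle : sInf (A ∪ B) ≤ a0 := sInf_le (Or.inl ha0)
            rcases hle.lt_or_eq with hlt | heq
            · rcases hAF ha0 with haF | haC | haT
              · exact hFsubFC (P1F a0 haF _ ht hlt)
              · rw [Set.mem_singleton_iff] at haC
                exact Or.inr (Or.inr ⟨ht, haC ▸ hlt.le⟩)
              · exact Or.inr (Or.inr ⟨ht, hlt.le.trans haT.2⟩)
            · rw [heq]; exact hAF ha0
          · exact hrest.1
    · intro Y hY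
      set A : Set Kt := {k | (k, false) ∈ Y} with hA
      set B : Set Kt := {k | (k, true) ∈ Y} with hB
      have hAF : A ⊆ FC := fun k hk => (memCf k).1 (hY hk)
      have hBT : B ⊆ TC := fun k hk => (memCt k).1 (hY hk)
      rw [Y_decomp Y, ← hA, ← hB, sSup_union, sSup_img_false]
      rcases Set.eq_empty_or_nonempty B with hBe | hBne
      · rw [hBe, Set.image_empty, sSup_empty, sup_bot_eq]
        exact (memCf _).2 (FCsup A hAF)
      · rw [sSup_img_true B hBne, Prod.mk_sup_mk, (rfl : (false ⊔ true) = true)]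
        refine (memCt _).2 ?_
        rcases le_or_gt (sSup A) (sSup B) with hle | hlt
        · rw [sup_eq_right.2 hle]; exact TCsup B hBT hBne
        · rw [sup_eq_left.2 hlt.le]
          refine Or.inr ⟨FCsup A hAF, ?_⟩
          obtain ⟨b0, hb0⟩ := hBne
          rcases hBT hb0 with htb | hrb
          · exact ⟨b0, htb, lt_of_le_of_lt (le_sSup hb0) hlt⟩
          · obtain ⟨t, ht, htlt⟩ := hrb.2
            exact ⟨t, ht, lt_of_le_of_lt (htlt.le.trans (le_sSup hb0)) hlt⟩
  have hXC : X ∪ {((c : Kt), false)} ⊆ C := by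
    rintro p (hp | hp)
    · have hpS : p ∈ S := subset_latGen X hp
      obtain ⟨k, b⟩ := p
      cases b
      · exact (memCf k).2 (hFsubFC hpS)
      · exact (memCt k).2 (Or.inl hpS)
    · rw [Set.mem_singleton_iff] at hp
      subst hp
      exact (memCf c).2 (Or.inr (Or.inl rfl))
  have hCuniv : C = Set.univ := by
    have h := latGen_subset hCcs hXC
    rw [hX] at h
    exact Set.eq_univ_of_univ_subset h
  have hFCall : ∀ k : Kt, k ∈ FC := fun k =>
    (memCf k).1 (hCuniv ▸ Set.mem_univ ((k, false) : Kt × Bool))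
  have hTCall : ∀ k : Kt, k ∈ TC := fun k =>
    (memCt k).1 (hCuniv ▸ Set.mem_univ ((k, true) : Kt × Bool))
  have botT : (⊥ : Kt) ∈ T := by
    rcases hTCall ⊥ with h | h
    · exact h
    · obtain ⟨t, ht, hlt⟩ := h.2
      exact absurd hlt (not_lt_bot)
  have FsubT : F ⊆ T := by
    intro f hf
    rcases eq_or_lt_of_le (bot_le : (⊥ : Kt) ≤ f) with h | h
    · rwa [← h]
    · exact P1T f hf ⊥ botT h
  have d3 : ∀ k : Kt, k ∈ T ∨ k = c := by
    intro k
    rcases hFCall k with h | h | h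
    · exact Or.inl (FsubT h)
    · exact Or.inr h
    · exact Or.inl h.1
  have hcT : c ∈ T := by
    obtain ⟨m, rfl⟩ : ∃ m, n = m + 1 := ⟨n - 1, by omega⟩
    have hsub : Set.range (fun k : ℕ => ((toLex (m, k) : ℕ ×ₗ ℕ) : Kt)) ⊆ T := by
      rintro x ⟨k, rfl⟩
      rcases d3 ((toLex (m, k) : ℕ ×ₗ ℕ) : Kt) with h | h
      · exact h
      · exfalso
        rw [hc] at h
        have h2 := WithTop.coe_injective h
        have h3 : (m, k) = (m + 1, 0) := h2
        have h4 : m = m + 1 := congrArg Prod.fst h3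
        omega
    have h := Tsup _ hsub ⟨_, Set.mem_range_self 0⟩
    rwa [Kt.sSup_col m, ← hc] at h
  have Tall : ∀ k : Kt, k ∈ T := fun k => (d3 k).elim id (fun h => h ▸ hcT)
  have topF : (⊤ : Kt) ∈ F := by
    rcases hFCall ⊤ with h | h | h
    · exact h
    · rw [Set.mem_singleton_iff] at h
      exact absurd h.symm (by rw [hc]; exact WithTop.coe_ne_top)
    · exfalso
      have h2 : c = ⊤ := top_le_iff.1 h.2
      rw [hc] at h2
      exact WithTop.coe_ne_top h2
  have Fall : ∀ k : Kt, k ∈ F := by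
    intro k
    rcases eq_or_lt_of_le (le_top : k ≤ (⊤ : Kt)) with h | h
    · rw [h]; exact topF
    · exact P1F ⊤ topF k (Tall k) h
  apply hS0
  rw [Set.eq_univ_iff_forall]
  rintro ⟨k, b⟩
  cases b
  · exact Fall k
  · exact Tall k

/-- In `L₂ = (WithTop (ℕ ×ₗ ℕ)) × Bool`, the element `(⊤, false)` is a relative generator
but belongs to the complete sublattice generated by the set `Γ` of non-generators
(indeed `(⊤, false) = ⨆ n, ((n, 0), false)` with `((n, 0), false) ∈ Γ` for `n ≥ 1`).
In particular `Γ` is not a complete sublattice. -/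
theorem nonGenerators_L2_not_sublattice :
    ¬ IsLatNonGenerator (((⊤ : WithTop (ℕ ×ₗ ℕ)), false) : WithTop (ℕ ×ₗ ℕ) × Bool) ∧
    (((⊤ : WithTop (ℕ ×ₗ ℕ)), false) : WithTop (ℕ ×ₗ ℕ) × Bool) ∈
      latGen {a : WithTop (ℕ ×ₗ ℕ) × Bool | IsLatNonGenerator a} ∧
    (((⊤ : WithTop (ℕ ×ₗ ℕ)), false) : WithTop (ℕ ×ₗ ℕ) × Bool) =
      ⨆ n : ℕ, (((toLex (n, 0) : ℕ ×ₗ ℕ) : WithTop (ℕ ×ₗ ℕ)), false) ∧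
    (∀ n : ℕ, 1 ≤ n →
      IsLatNonGenerator (((toLex (n, 0) : ℕ ×ₗ ℕ) : WithTop (ℕ ×ₗ ℕ)), false)) ∧
    ¬ IsCompleteSublattice {a : WithTop (ℕ ×ₗ ℕ) × Bool | IsLatNonGenerator a} := by
  -- Part 1 : (⊤, false) is a relative generator
  have part1 : ¬ IsLatNonGenerator (((⊤ : Kt), false) : Kt × Bool) := by
    set P : Set (Kt × Bool) := {p | p.2 = true ∨ p.1 = ⊥} with hPdef
    have hP : IsCompleteSublattice P := by
      constructor
      · intro Y hY
        by_cases hall : ∀ y ∈ Y, y.2 = true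
        · left
          rw [Prod.snd_sInf]
          refine sInf_eq_top.2 ?_
          rintro b ⟨y, hy, rfl⟩
          exact hall y hy
        · push_neg at hall
          obtain ⟨y, hy, hy2⟩ := hall
          right
          have hyb : y.1 = ⊥ := by
            rcases hY hy with h | h
            · exact absurd h hy2
            · exact h
          have h := (Prod.le_def.1 (sInf_le hy)).1
          rw [hyb] at h
          exact le_bot_iff.1 h
      · intro Y hY
        by_cases hex : ∃ y ∈ Y, y.2 = true
        · left
          obtain ⟨y, hy, hy2⟩ := hex
          rw [Prod.snd_sSup]
          exact eq_top_iff.2 (le_sSup ⟨y, hy, hy2⟩)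
        · push_neg at hex
          right
          rw [Prod.fst_sSup]
          refine le_bot_iff.1 (sSup_le ?_)
          rintro k ⟨y, hy, rfl⟩
          rcases hY hy with h | h
          · exact absurd h (hex y hy)
          · exact le_of_eq h
    have hPne : (((toLex (1, 0) : ℕ ×ₗ ℕ) : Kt), false) ∉ P := by
      intro h
      rcases h with h | h
      · exact Bool.false_ne_true h
      · have hb : (⊥ : Kt) < ((toLex (1, 0) : ℕ ×ₗ ℕ) : Kt) :=
          lt_of_le_of_lt (bot_le : (⊥ : Kt) ≤ ((toLex (0, 0) : ℕ ×ₗ ℕ) : Kt))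
            (Kt.coe_lex_lt.2 (Or.inl Nat.zero_lt_one))
        exact absurd h hb.ne'
    have hPgen : latGen (P ∪ {(((⊤ : Kt), false) : Kt × Bool)}) = Set.univ := by
      rw [Set.eq_univ_iff_forall]
      intro p
      refine Set.mem_sInter.2 ?_
      intro Sg hSg
      obtain ⟨k, b⟩ := p
      cases b
      · have h1 : ((k, true) : Kt × Bool) ∈ Sg := hSg.2 (Or.inl (Or.inl rfl))
        have h2 : (((⊤ : Kt), false) : Kt × Bool) ∈ Sg := hSg.2 (Or.inr rfl)
        have h := hSg.1.1 {((k, true) : Kt × Bool), ((⊤ : Kt), false)} (by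
          rintro x hx
          rcases hx with rfl | hx
          · exact h1
          · rw [Set.mem_singleton_iff] at hx; subst hx; exact h2)
        rwa [sInf_pair, Prod.mk_inf_mk, inf_top_eq, (rfl : (true ⊓ false) = false)] at h
      · exact hSg.2 (Or.inl (Or.inl rfl))
    intro h
    have h2 := h P hPgen
    have h3 : latGen P ⊆ P := latGen_subset hP (subset_refl P)
    rw [h2] at h3
    exact hPne (h3 (Set.mem_univ _))
  -- Part 4 : the non-generators ((n,0), false), n ≥ 1
  have part4 : ∀ n : ℕ, 1 ≤ n →
      IsLatNonGenerator (((toLex (n, 0) : ℕ ×ₗ ℕ) : Kt), false) := nongen_col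
  -- Part 2 : (⊤, false) belongs to latGen of the non-generators
  have part2 : (((⊤ : Kt), false) : Kt × Bool) ∈
      latGen {a : Kt × Bool | IsLatNonGenerator a} := by
    refine Set.mem_sInter.2 ?_
    intro Sg hSg
    set A : Set Kt := Set.range (fun m : ℕ => ((toLex (m + 1, 0) : ℕ ×ₗ ℕ) : Kt)) with hAdef
    have hsub : ∀ k ∈ A, ((k, false) : Kt × Bool) ∈ Sg := by
      rintro k ⟨m, rfl⟩
      exact hSg.2 (part4 (m + 1) (by omega))
    have h := CSmem_supF hSg.1 hsub
    have hsup : sSup A = (⊤ : Kt) := by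
      refine Kt.sSup_top_of ?_
      intro p q
      exact ⟨((toLex (p + 1, 0) : ℕ ×ₗ ℕ) : Kt), ⟨p, rfl⟩,
        Kt.coe_lex_lt.2 (Or.inl (Nat.lt_succ_self p))⟩
    rwa [hsup] at h
  -- Part 3 : the sup formula
  have part3 : (((⊤ : Kt), false) : Kt × Bool) =
      ⨆ n : ℕ, (((toLex (n, 0) : ℕ ×ₗ ℕ) : Kt), false) := by
    rw [← sSup_range]
    have hr : Set.range (fun n : ℕ => ((((toLex (n, 0) : ℕ ×ₗ ℕ) : Kt), false) : Kt × Bool)) =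
        (fun k => ((k, false) : Kt × Bool)) ''
          Set.range (fun n : ℕ => ((toLex (n, 0) : ℕ ×ₗ ℕ) : Kt)) := by
      rw [← Set.range_comp]; rfl
    rw [hr, sSup_img_false]
    have hsup : sSup (Set.range (fun n : ℕ => ((toLex (n, 0) : ℕ ×ₗ ℕ) : Kt))) = (⊤ : Kt) := by
      refine Kt.sSup_top_of ?_
      intro p q
      exact ⟨((toLex (p + 1, 0) : ℕ ×ₗ ℕ) : Kt), ⟨p + 1, rfl⟩,
        Kt.coe_lex_lt.2 (Or.inl (Nat.lt_succ_self p))⟩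
    rw [hsup]
  -- Part 5 : Γ is not a complete sublattice
  have part5 : ¬ IsCompleteSublattice {a : Kt × Bool | IsLatNonGenerator a} := by
    intro hcs
    have h2 : latGen {a : Kt × Bool | IsLatNonGenerator a} ⊆
        {a : Kt × Bool | IsLatNonGenerator a} := latGen_subset hcs subset_rfl
    exact part1 (h2 part2)
  exact ⟨part1, part2, part3, part4, part5⟩
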